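/- For k > 0 define Ĉ(k,c) = 1 - ∫₀^c (2k / Y_BS(k,u)²) du for 0 < c < 1. Then Ĉ(k,c) > 0 and Y_BS(k,c) = 2k / Y_BS(k, Ĉ(k,c)). -/

import Mathlib

/-!
Write `Y(u) = Y_BS(k,u)` and `d₊(k,y) = -k/y + y/2`. The vega identity `∂C_BS/∂y = φ(d₊)` and the
symmetry `d₊(k, 2k/y) = -d₊(k, y)` show, via the inverse function theorem for `Y`, that
`u ↦ C_BS(k, 2k/Y(u))` has derivative `-2k/Y(u)²` on `(0,1)`. As `u → 0⁺` we have `Y(u) → 0⁺`, so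
`C_BS(k, 2k/Y(u)) → 1`. Hence `∫₀^c 2k/Y² = 1 - C_BS(k, 2k/Y(c))`, i.e. `Ĉ(k,c) = C_BS(k, 2k/Y(c))`,
which lies in `(0,1)` and satisfies `Y(Ĉ(k,c)) = 2k/Y(c)`.
-/

open MeasureTheory Real Filter Asymptotics Set

/-- Standard normal density. -/
noncomputable def phi (z : ℝ) : ℝ := (Real.sqrt (2 * Real.pi))⁻¹ * Real.exp (-z ^ 2 / 2)

/-- Standard normal CDF. -/
noncomputable def Phi (x : ℝ) : ℝ := ∫ z in Set.Iic x, phi z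

/-- Black–Scholes normalized call price. -/
noncomputable def CBS (k y : ℝ) : ℝ :=
  if 0 < y then Phi (-k / y + y / 2) - Real.exp k * Phi (-k / y - y / 2)
  else max (1 - Real.exp k) 0

/-- Implied total standard deviation: inverse of `CBS k` on `[0,∞)`. -/
noncomputable def YBS (k c : ℝ) : ℝ := sInf {y : ℝ | 0 ≤ y ∧ CBS k y = c}

/-- Inverse of the standard normal CDF on (0,1). -/
noncomputable def PhiInv (u : ℝ) : ℝ := sInf {x : ℝ | u ≤ Phi x}

/-- Extended-real quantile with the convention `Φ⁻¹(u) = +∞` for `u ≥ 1`, `-∞` for `u ≤ 0`. -/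
noncomputable def PhiInvE (u : ℝ) : EReal :=
  if 1 ≤ u then ⊤ else if u ≤ 0 then ⊥ else ((PhiInv u : ℝ) : EReal)

open scoped Topology
open ProbabilityTheory

lemma phi_eq_gaussianPDFReal : phi = gaussianPDFReal 0 1 := by
  ext z
  simp [phi, gaussianPDFReal]

lemma phi_pos (z : ℝ) : 0 < phi z :=
  phi_eq_gaussianPDFReal ▸ gaussianPDFReal_pos 0 1 z one_ne_zero

lemma phi_neg (z : ℝ) : phi (-z) = phi z := by
  simp [phi]

lemma continuous_phi : Continuous phi := by
  unfold phi
  fun_prop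

lemma integrable_phi : Integrable phi :=
  phi_eq_gaussianPDFReal ▸ integrable_gaussianPDFReal 0 1

lemma Phi_eq_cdf : Phi = cdf (gaussianReal 0 1) := by
  ext x
  rw [cdf_eq_real, measureReal_def, gaussianReal_apply_eq_integral 0 one_ne_zero,
    ENNReal.toReal_ofReal (setIntegral_nonneg measurableSet_Iic
      fun z _ => gaussianPDFReal_nonneg 0 1 z), Phi, phi_eq_gaussianPDFReal]

lemma tendsto_Phi_atTop : Tendsto Phi atTop (𝓝 1) :=
  Phi_eq_cdf ▸ tendsto_cdf_atTop _

lemma tendsto_Phi_atBot : Tendsto Phi atBot (𝓝 0) :=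
  Phi_eq_cdf ▸ tendsto_cdf_atBot _

lemma hasDerivAt_Phi (x : ℝ) : HasDerivAt Phi (phi x) x := by
  have hPhi : ∀ y, Phi x + ∫ t in x..y, phi t = Phi y := fun y => by
    rw [Phi, Phi, ← intervalIntegral.integral_Iic_sub_Iic integrable_phi.integrableOn
      integrable_phi.integrableOn]
    ring
  refine HasDerivAt.congr_of_eventuallyEq ?_ (Eventually.of_forall fun y => (hPhi y).symm)
  exact (intervalIntegral.integral_hasDerivAt_right integrable_phi.intervalIntegrable
    (continuous_phi.stronglyMeasurableAtFilter _ _) continuous_phi.continuousAt).const_add _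

noncomputable def dPlus (k y : ℝ) : ℝ := -k / y + y / 2

section CBS

variable {k y : ℝ}

lemma CBS_of_pos (hy : 0 < y) :
    CBS k y = Phi (dPlus k y) - Real.exp k * Phi (dPlus k y - y) := by
  rw [CBS, if_pos hy, dPlus]
  congr 3
  ring

lemma CBS_zero (hk : 0 ≤ k) : CBS k 0 = 0 := by
  simp [CBS, Real.one_le_exp hk]

lemma dPlus_two_mul_div (hk : k ≠ 0) (hy : y ≠ 0) : dPlus k (2 * k / y) = -dPlus k y := by
  simp only [dPlus]
  field_simp
  ring

lemma exp_mul_phi_dPlus_sub (hy : y ≠ 0) :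
    Real.exp k * phi (dPlus k y - y) = phi (dPlus k y) := by
  simp only [phi, dPlus]
  rw [mul_left_comm, ← Real.exp_add]
  congr 2
  field_simp
  ring

lemma hasDerivAt_dPlus (hy : y ≠ 0) : HasDerivAt (dPlus k) (k / y ^ 2 + 1 / 2) y := by
  have h := ((hasDerivAt_inv hy).const_mul (-k)).add ((hasDerivAt_id' y).div_const 2)
  refine (h.congr_deriv (by field_simp)).congr_of_eventuallyEq (Eventually.of_forall fun z => ?_)
  simp only [dPlus, Pi.add_apply, div_eq_mul_inv, neg_mul]

-- The two `d₊'` terms cancel because `e^k φ(d₊ - y) = φ(d₊)`.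
lemma hasDerivAt_CBS (hy : 0 < y) : HasDerivAt (CBS k) (phi (dPlus k y)) y := by
  have hd := hasDerivAt_dPlus (k := k) hy.ne'
  have h : HasDerivAt (fun z => Phi (dPlus k z) - Real.exp k * Phi (dPlus k z - z))
      (phi (dPlus k y) * (k / y ^ 2 + 1 / 2) -
        Real.exp k * (phi (dPlus k y - y) * (k / y ^ 2 + 1 / 2 - 1))) y :=
    ((hasDerivAt_Phi _).comp y hd).sub
      (((hasDerivAt_Phi _).comp y (hd.sub (hasDerivAt_id' y))).const_mul (Real.exp k))
  rw [← mul_assoc, exp_mul_phi_dPlus_sub hy.ne'] at h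
  refine (h.congr_deriv (by ring)).congr_of_eventuallyEq ?_
  filter_upwards [Ioi_mem_nhds hy] with z hz
  exact CBS_of_pos hz

lemma CBS_strictMonoOn (k : ℝ) : StrictMonoOn (CBS k) (Ioi 0) :=
  strictMonoOn_of_hasDerivWithinAt_pos (convex_Ioi 0)
    (fun _ hy => (hasDerivAt_CBS hy).continuousAt.continuousWithinAt)
    (fun _ hy => (hasDerivAt_CBS (interior_subset hy)).hasDerivWithinAt)
    (fun _ _ => phi_pos _)

lemma tendsto_CBS_nhdsGT_zero (hk : 0 < k) : Tendsto (CBS k) (𝓝[>] 0) (𝓝 0) := by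
  have hy : Tendsto (fun y : ℝ => y) (𝓝[>] 0) (𝓝 0) := nhdsWithin_le_nhds
  have hd : Tendsto (dPlus k) (𝓝[>] 0) atBot := by
    have := (tendsto_inv_nhdsGT_zero.const_mul_atTop_of_neg (neg_lt_zero.2 hk)).atBot_add
      (hy.div_const 2)
    refine this.congr fun z => ?_
    simp only [dPlus]
    ring
  have h := (tendsto_Phi_atBot.comp hd).sub
    ((tendsto_Phi_atBot.comp (hd.atBot_add hy.neg)).const_mul (Real.exp k))
  rw [mul_zero, sub_zero] at h
  refine h.congr' ?_
  filter_upwards [self_mem_nhdsWithin] with z hz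
  simp [CBS_of_pos hz, sub_eq_add_neg]

lemma tendsto_CBS_atTop (k : ℝ) : Tendsto (CBS k) atTop (𝓝 1) := by
  have hdiv : Tendsto (fun y : ℝ => -k / y) atTop (𝓝 0) :=
    tendsto_const_nhds.div_atTop tendsto_id
  have hy : Tendsto (fun y : ℝ => y / 2) atTop atTop := tendsto_id.atTop_div_const two_pos
  have h := (tendsto_Phi_atTop.comp (hdiv.add_atTop hy)).sub
    ((tendsto_Phi_atBot.comp (hdiv.add_atBot (tendsto_neg_atTop_atBot.comp hy))).const_mul
      (Real.exp k))
  rw [mul_zero, sub_zero] at h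
  refine h.congr' ?_
  filter_upwards [eventually_gt_atTop 0] with z hz
  simp only [CBS_of_pos hz, dPlus, Function.comp_apply]
  ring_nf

lemma CBS_mem_Ioo (hk : 0 < k) (hy : 0 < y) : CBS k y ∈ Ioo 0 1 := by
  have hmono := CBS_strictMonoOn k
  have hy2 : (0 : ℝ) < y / 2 := half_pos hy
  have hy1 : (0 : ℝ) < y + 1 := by linarith
  constructor
  · refine lt_of_le_of_lt (le_of_tendsto (tendsto_CBS_nhdsGT_zero hk) ?_)
      (hmono hy2 hy (half_lt_self hy))
    filter_upwards [Ioo_mem_nhdsGT hy2] with a ha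
    exact (hmono ha.1 hy2 ha.2).le
  · refine lt_of_lt_of_le (hmono hy hy1 (lt_add_one y)) (ge_of_tendsto (tendsto_CBS_atTop k) ?_)
    filter_upwards [eventually_gt_atTop (y + 1)] with a ha
    exact (hmono hy1 (hy1.trans ha) ha).le

end CBS

section YBS

variable {k c : ℝ}

lemma YBS_CBS (hk : 0 < k) {y : ℝ} (hy : 0 < y) : YBS k (CBS k y) = y := by
  have hsingleton : {y' : ℝ | 0 ≤ y' ∧ CBS k y' = CBS k y} = {y} := by
    ext y'
    refine ⟨fun ⟨hy', hCy'⟩ => ?_, fun h => ⟨h ▸ hy.le, h ▸ rfl⟩⟩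
    rcases hy'.eq_or_lt with rfl | hy'
    · exact absurd (hCy'.symm.trans (CBS_zero hk.le)) (CBS_mem_Ioo hk hy).1.ne'
    · exact (CBS_strictMonoOn k).injOn hy' hy hCy'
  rw [YBS, hsingleton, csInf_singleton]

lemma exists_CBS_eq (hk : 0 < k) (hc : c ∈ Ioo 0 1) : ∃ y, 0 < y ∧ CBS k y = c := by
  obtain ⟨a, hac, ha⟩ :=
    ((tendsto_CBS_nhdsGT_zero hk).eventually (eventually_lt_nhds hc.1)).and
      self_mem_nhdsWithin |>.exists
  obtain ⟨b, hcb, hab⟩ :=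
    ((tendsto_CBS_atTop k).eventually (eventually_gt_nhds hc.2)).and
      (eventually_gt_atTop a) |>.exists
  obtain ⟨y, hy, rfl⟩ := intermediate_value_Icc hab.le
    (fun z hz => (hasDerivAt_CBS (lt_of_lt_of_le ha hz.1)).continuousAt.continuousWithinAt)
    ⟨hac.le, hcb.le⟩
  exact ⟨y, lt_of_lt_of_le ha hy.1, rfl⟩

lemma YBS_pos_and_CBS_YBS (hk : 0 < k) (hc : c ∈ Ioo 0 1) :
    0 < YBS k c ∧ CBS k (YBS k c) = c := by
  obtain ⟨y, hy, rfl⟩ := exists_CBS_eq hk hc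
  rw [YBS_CBS hk hy]
  exact ⟨hy, rfl⟩

lemma YBS_lt_iff (hk : 0 < k) (hc : c ∈ Ioo 0 1) {b : ℝ} (hb : 0 < b) :
    YBS k c < b ↔ c < CBS k b := by
  obtain ⟨hY, hCY⟩ := YBS_pos_and_CBS_YBS hk hc
  conv_rhs => rw [← hCY]
  exact ((CBS_strictMonoOn k).lt_iff_lt hY hb).symm

lemma monotoneOn_YBS (hk : 0 < k) : MonotoneOn (YBS k) (Ioo 0 1) := by
  intro u hu v hv huv
  obtain ⟨hYu, hCYu⟩ := YBS_pos_and_CBS_YBS hk hu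
  obtain ⟨hYv, hCYv⟩ := YBS_pos_and_CBS_YBS hk hv
  rwa [← (CBS_strictMonoOn k).le_iff_le hYu hYv, hCYu, hCYv]

lemma continuousAt_YBS (hk : 0 < k) (hc : c ∈ Ioo 0 1) : ContinuousAt (YBS k) c := by
  refine continuousAt_of_monotoneOn_of_image_mem_nhds (monotoneOn_YBS hk)
    (Ioo_mem_nhds hc.1 hc.2) (mem_of_superset (Ioi_mem_nhds (YBS_pos_and_CBS_YBS hk hc).1) ?_)
  exact fun y hy => ⟨CBS k y, CBS_mem_Ioo hk hy, YBS_CBS hk hy⟩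

lemma hasDerivAt_YBS (hk : 0 < k) (hc : c ∈ Ioo 0 1) :
    HasDerivAt (YBS k) (phi (dPlus k (YBS k c)))⁻¹ c := by
  refine HasDerivAt.of_local_left_inverse (continuousAt_YBS hk hc)
    (hasDerivAt_CBS (YBS_pos_and_CBS_YBS hk hc).1) (phi_pos _).ne' ?_
  filter_upwards [Ioo_mem_nhds hc.1 hc.2] with u hu
  exact (YBS_pos_and_CBS_YBS hk hu).2

lemma tendsto_YBS_nhdsGT_zero (hk : 0 < k) : Tendsto (YBS k) (𝓝[>] 0) (𝓝[>] 0) := by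
  have hunit : ∀ᶠ u in 𝓝[>] (0 : ℝ), u ∈ Ioo 0 1 := Ioo_mem_nhdsGT one_pos
  refine tendsto_nhdsWithin_iff.2 ⟨tendsto_order.2 ⟨fun b hb => ?_, fun b hb => ?_⟩, ?_⟩
  · filter_upwards [hunit] with u hu
    exact hb.trans (YBS_pos_and_CBS_YBS hk hu).1
  · filter_upwards [hunit, Ioo_mem_nhdsGT (CBS_mem_Ioo hk hb).1] with u hu hub
    exact (YBS_lt_iff hk hu hb).2 hub.2
  · filter_upwards [hunit] with u hu
    exact (YBS_pos_and_CBS_YBS hk hu).1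

end YBS

-- No integrability hypothesis: a nonnegative derivative of a function with a finite limit
-- is integrable.
theorem integral_eq_sub_of_hasDerivAt_of_nonneg_of_tendsto {f f' : ℝ → ℝ} {a b L : ℝ}
    (hab : a < b) (hderiv : ∀ x ∈ Ioc a b, HasDerivAt f (f' x) x)
    (hpos : ∀ x ∈ Ioo a b, 0 ≤ f' x) (hf : Tendsto f (𝓝[>] a) (𝓝 L)) :
    ∫ x in a..b, f' x = f b - L := by
  classical
  set F := Function.update f a L
  have hF : ∀ x ∈ Ioo a b, HasDerivAt F (f' x) x := fun x hx =>
    (hderiv x (Ioo_subset_Ioc_self hx)).congr_of_eventuallyEq <| by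
      filter_upwards [Ioi_mem_nhds hx.1] with y hy using Function.update_of_ne hy.ne' _ _
  have hcont : ContinuousOn F (Icc a b) := by
    rw [continuousOn_update_iff, Icc_sdiff_left]
    exact ⟨fun x hx => (hderiv x hx).continuousAt.continuousWithinAt,
      fun _ => hf.mono_left (nhdsWithin_mono _ Ioc_subset_Ioi_self)⟩
  have hint := intervalIntegral.intervalIntegrable_deriv_of_nonneg (g := F)
    (by rwa [uIcc_of_le hab.le]) (by simpa [hab.le] using hF) (by simpa [hab.le] using hpos)
  simpa [F, hab.ne'] using intervalIntegral.integral_eq_sub_of_hasDerivAt_of_le hab.le hcont hF hint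

section Dual

variable {k : ℝ}

lemma hasDerivAt_CBS_two_mul_div_YBS (hk : 0 < k) {c : ℝ} (hc : c ∈ Ioo 0 1) :
    HasDerivAt (fun u => CBS k (2 * k / YBS k u)) (-(2 * k / YBS k c ^ 2)) c := by
  have hY := (YBS_pos_and_CBS_YBS hk hc).1
  have h := (hasDerivAt_CBS (k := k) (by positivity : 0 < 2 * k / YBS k c)).comp c
    ((hasDerivAt_const c (2 * k)).div (hasDerivAt_YBS hk hc) hY.ne')
  -- the symmetry `d₊(2k/y) = -d₊(y)` makes the two Gaussian densities cancel
  rw [dPlus_two_mul_div hk.ne' hY.ne', phi_neg] at h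
  refine h.congr_deriv ?_
  have := (phi_pos (dPlus k (YBS k c))).ne'
  field_simp
  ring

lemma tendsto_CBS_two_mul_div_YBS (hk : 0 < k) :
    Tendsto (fun u => CBS k (2 * k / YBS k u)) (𝓝[>] 0) (𝓝 1) :=
  (tendsto_CBS_atTop k).comp <| by
    simpa only [div_eq_mul_inv, Function.comp_def] using
      (tendsto_inv_nhdsGT_zero.comp (tendsto_YBS_nhdsGT_zero hk)).const_mul_atTop
        (by positivity : 0 < 2 * k)

lemma integral_two_mul_div_YBS_sq (hk : 0 < k) {c : ℝ} (hc : c ∈ Ioo 0 1) :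
    ∫ u in (0:ℝ)..c, 2 * k / (YBS k u) ^ 2 = 1 - CBS k (2 * k / YBS k c) := by
  have hsub : Ioc 0 c ⊆ Ioo 0 1 := fun u hu => ⟨hu.1, hu.2.trans_lt hc.2⟩
  have h := integral_eq_sub_of_hasDerivAt_of_nonneg_of_tendsto
    (f := fun u => -CBS k (2 * k / YBS k u)) hc.1 (fun u hu => (hasDerivAt_CBS_two_mul_div_YBS hk (hsub hu)).neg.congr_deriv (neg_neg _))
    (fun u hu => by have := (YBS_pos_and_CBS_YBS hk (hsub (Ioo_subset_Ioc_self hu))).1; positivity)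
    (tendsto_CBS_two_mul_div_YBS hk).neg
  rw [h]
  ring

end Dual

theorem stmt_5 (k c : ℝ) (hk : 0 < k) (hc0 : 0 < c) (hc1 : c < 1) :
    0 < 1 - ∫ u in (0:ℝ)..c, 2 * k / (YBS k u) ^ 2 ∧
    YBS k c = 2 * k / YBS k (1 - ∫ u in (0:ℝ)..c, 2 * k / (YBS k u) ^ 2) := by
  have hc : c ∈ Ioo 0 1 := ⟨hc0, hc1⟩
  have hY := (YBS_pos_and_CBS_YBS hk hc).1
  have hdual : 0 < 2 * k / YBS k c := by positivity
  rw [integral_two_mul_div_YBS_sq hk hc, sub_sub_cancel, YBS_CBS hk hdual]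
  exact ⟨(CBS_mem_Ioo hk hdual).1, by field_simp⟩
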